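/- arXiv:2304.12676 — 4 statements merged into one kernel-verified Lean document; each statement's English description precedes it below -/
import Mathlib

section
/- Integration by parts for the graph p-Laplacian: let p > 1, let u : V → ℝ be any function and let φ : V → ℝ have finite support. Then ∑_{x∈V} μ(x)·Δ_p u(x)·φ(x) = −∑_{x∈V} μ(x)·|∇u|^{p−2}(x)·Γ(u,φ)(x), where both sums have only finitely many nonzero terms because the graph is locally finite. -/
open scoped BigOperators
open Filter Topology

/-- A locally finite weighted graph: `ω x y ≠ 0` encodes the edge relation `x ∼ y`,
edge weights are symmetric and nonnegative, `μ` is a positive vertex measure, and every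
vertex has finitely many neighbors. -/
structure WGraph (V : Type*) where
  ω : V → V → ℝ
  μ : V → ℝ
  symm : ∀ x y, ω x y = ω y x
  loopless : ∀ x, ω x x = 0
  weight_nonneg : ∀ x y, 0 ≤ ω x y
  mu_pos : ∀ x, 0 < μ x
  locFin : ∀ x, {y | ω x y ≠ 0}.Finite

namespace WGraph

variable {V : Type*}

/-- The gradient form `Γ(u,v)(x)`. -/
noncomputable def gamma (G : WGraph V) (u v : V → ℝ) (x : V) : ℝ :=
  (1 / (2 * G.μ x)) * ∑' y, G.ω x y * (u y - u x) * (v y - v x)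

/-- The length of the gradient `|∇u|(x)`. -/
noncomputable def grad (G : WGraph V) (u : V → ℝ) (x : V) : ℝ :=
  Real.sqrt (G.gamma u u x)

/-- The graph `p`-Laplacian `Δ_p u (x)`. -/
noncomputable def lapP (G : WGraph V) (p : ℝ) (u : V → ℝ) (x : V) : ℝ :=
  (1 / (2 * G.μ x)) *
    ∑' y, (G.grad u y ^ (p - 2) + G.grad u x ^ (p - 2)) * (G.ω x y * (u y - u x))

/-- The degree `deg(x) = ∑_{y ∼ x} ω_{xy}`. -/
noncomputable def deg (G : WGraph V) (x : V) : ℝ := ∑' y, G.ω x y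

/-- The underlying simple graph: `x ∼ y` iff `ω x y ≠ 0`. -/
def toSimpleGraph (G : WGraph V) : SimpleGraph V where
  Adj x y := G.ω x y ≠ 0
  symm := by
    constructor
    intro x y hxy
    rw [G.symm]
    exact hxy
  loopless := by
    constructor
    intro x hx
    exact hx (G.loopless x)

/-- The graph distance `dist(x,y)`: the minimal number of edges joining `x` and `y`. -/
noncomputable def dist (G : WGraph V) (x y : V) : ℕ := (G.toSimpleGraph).dist x y

/-- `∑_{x∈V} μ(x)(|∇u|^s(x) + h(x)|u(x)|^s)`, the `s`-th power of the `W_h^{1,s}(V)` norm. -/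
noncomputable def sobSum (G : WGraph V) (h : V → ℝ) (s : ℝ) (u : V → ℝ) : ℝ :=
  ∑' x, G.μ x * (G.grad u x ^ s + h x * |u x| ^ s)

/-- Finiteness of the Sobolev sum, i.e. membership in `W_h^{1,s}(V)`. -/
def SobSummable (G : WGraph V) (h : V → ℝ) (s : ℝ) (u : V → ℝ) : Prop :=
  Summable fun x => G.μ x * (G.grad u x ^ s + h x * |u x| ^ s)

/-- The `W_h^{1,s}(V)` norm. -/
noncomputable def sobNorm (G : WGraph V) (h : V → ℝ) (s : ℝ) (u : V → ℝ) : ℝ :=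
  (G.sobSum h s u) ^ (1 / s)

/-- Membership in `L^r(V)`. -/
def MemLpV (G : WGraph V) (r : ℝ) (g : V → ℝ) : Prop :=
  Summable fun x => G.μ x * |g x| ^ r

/-- The `L^r(V)` norm. -/
noncomputable def lpNorm (G : WGraph V) (r : ℝ) (g : V → ℝ) : ℝ :=
  (∑' x, G.μ x * |g x| ^ r) ^ (1 / r)

/-- The energy functional `φ_λ(u,v)` associated with the `(p,q)`-Laplacian system. -/
noncomputable def energy (G : WGraph V) (p q lam : ℝ) (h1 h2 e1 e2 : V → ℝ)
    (F : V → ℝ → ℝ → ℝ) (u v : V → ℝ) : ℝ :=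
  (1 / p) * G.sobSum h1 p u + (1 / q) * G.sobSum h2 q v
    - ∑' x, G.μ x * F x (u x) (v x)
    - lam * ∑' x, G.μ x * (e1 x * u x + e2 x * v x)

/-- The energy functional `φ_ε(u)` associated with the scalar `p`-Laplacian equation. -/
noncomputable def energyScalar (G : WGraph V) (p eps : ℝ) (h e : V → ℝ)
    (F : V → ℝ → ℝ) (u : V → ℝ) : ℝ :=
  (1 / p) * G.sobSum h p u - ∑' x, G.μ x * F x (u x) - eps * ∑' x, G.μ x * (e x * u x)

end WGraph

/-- `F(x,s,t)` is continuously differentiable in `(s,t)`, with partial derivatives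
`Fs` and `Ft`. -/
def IsC1Pair {V : Type*} (F Fs Ft : V → ℝ → ℝ → ℝ) : Prop :=
  ∀ x : V,
    (∀ s t : ℝ, HasDerivAt (fun z => F x z t) (Fs x s t) s) ∧
    (∀ s t : ℝ, HasDerivAt (fun z => F x s z) (Ft x s t) t) ∧
    Continuous (fun st : ℝ × ℝ => Fs x st.1 st.2) ∧
    Continuous (fun st : ℝ × ℝ => Ft x st.1 st.2)

/-- `F(x,s)` is continuously differentiable in `s`, with derivative `Fs`. -/
def IsC1Scalar {V : Type*} (F Fs : V → ℝ → ℝ) : Prop :=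
  ∀ x : V, (∀ s : ℝ, HasDerivAt (F x) (Fs x s) s) ∧ Continuous (Fs x)

/-
Proof idea: after clearing the factor `1 / (2μ)`, both sides are halves of double sums
over pairs `(x, y)`, supported in the finite set `A` of vertices in or adjacent to
`supp φ`. Splitting `Δ_p u` into its `|∇u|^{p-2}(y)` and `|∇u|^{p-2}(x)` parts and
exchanging `x ↔ y` in the first one, the symmetry `ω_{xy} = ω_{yx}` turns it into
`-∑ |∇u|^{p-2}(x) ω_{xy} (u(y) - u(x)) φ(y)`, which together with the second part is
`-∑ |∇u|^{p-2}(x) ω_{xy} (u(y) - u(x)) (φ(y) - φ(x))`.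
-/

theorem Finset.sum_sum_symm_weight_mul_sub {R ι : Type*} [CommRing R] (s : Finset ι)
    (w : ι → ι → R) (hw : ∀ x y, w x y = w y x) (a u φ : ι → R) :
    ∑ x ∈ s, ∑ y ∈ s, (a y + a x) * (w x y * (u y - u x)) * φ x
      = -∑ x ∈ s, ∑ y ∈ s, a x * (w x y * (u y - u x) * (φ y - φ x)) := by
  have swap : ∑ x ∈ s, ∑ y ∈ s, a y * (w x y * (u y - u x)) * φ x
      = -∑ x ∈ s, ∑ y ∈ s, a x * (w x y * (u y - u x)) * φ y := by
    rw [Finset.sum_comm, ← Finset.sum_neg_distrib]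
    refine Finset.sum_congr rfl fun x _ => ?_
    rw [← Finset.sum_neg_distrib]
    refine Finset.sum_congr rfl fun y _ => ?_
    rw [hw y x]
    ring
  have split_left : ∀ x y, (a y + a x) * (w x y * (u y - u x)) * φ x
      = a y * (w x y * (u y - u x)) * φ x + a x * (w x y * (u y - u x)) * φ x := by
    intros; ring
  have split_right : ∀ x y, a x * (w x y * (u y - u x) * (φ y - φ x))
      = a x * (w x y * (u y - u x)) * φ y - a x * (w x y * (u y - u x)) * φ x := by
    intros; ring
  simp only [split_left, split_right, Finset.sum_add_distrib, Finset.sum_sub_distrib, swap]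
  ring

theorem tsum_tsum_eq_sum_sum {α β M : Type*} [AddCommMonoid M] [TopologicalSpace M]
    (s : Finset α) (t : Finset β) (F : α → β → M) (hF : ∀ x y, F x y ≠ 0 → x ∈ s ∧ y ∈ t) :
    ∑' x, ∑' y, F x y = ∑ x ∈ s, ∑ y ∈ t, F x y := by
  have inner : ∀ x, ∑' y, F x y = ∑ y ∈ t, F x y := fun x =>
    tsum_eq_sum fun y hy => by_contra fun h => hy (hF x y h).2
  simp only [inner]
  exact tsum_eq_sum fun x hx => Finset.sum_eq_zero fun y _ =>
    by_contra fun h => hx (hF x y h).1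

namespace WGraph

variable {V : Type*} (G : WGraph V)

noncomputable def closedNbhd [DecidableEq V] (s : Finset V) : Finset V :=
  s ∪ s.biUnion fun x => (G.locFin x).toFinset

theorem mem_closedNbhd_of_adj [DecidableEq V] {s : Finset V} {x y : V} (hx : x ∈ s)
    (hxy : G.ω x y ≠ 0) : x ∈ G.closedNbhd s ∧ y ∈ G.closedNbhd s :=
  ⟨Finset.mem_union_left _ hx, Finset.mem_union_right _
    (Finset.mem_biUnion.mpr ⟨x, hx, (G.locFin x).mem_toFinset.mpr hxy⟩)⟩

theorem mem_closedNbhd_support_of_adj [DecidableEq V] {φ : V → ℝ} (hφ : φ.support.Finite)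
    {x y : V} (hxy : G.ω x y ≠ 0) (h : φ x ≠ 0 ∨ φ y ≠ 0) :
    x ∈ G.closedNbhd hφ.toFinset ∧ y ∈ G.closedNbhd hφ.toFinset := by
  rcases h with hx | hy
  · exact G.mem_closedNbhd_of_adj (hφ.mem_toFinset.mpr hx) hxy
  · exact (G.mem_closedNbhd_of_adj (hφ.mem_toFinset.mpr hy) (G.symm x y ▸ hxy)).symm

theorem mu_mul_lapP_mul (p : ℝ) (u φ : V → ℝ) (x : V) :
    G.μ x * (G.lapP p u x * φ x)
      = 2⁻¹ * ∑' y, (G.grad u y ^ (p - 2) + G.grad u x ^ (p - 2))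
          * (G.ω x y * (u y - u x)) * φ x := by
  rw [lapP, tsum_mul_right]
  field_simp [(G.mu_pos x).ne']

theorem mu_mul_mul_gamma (c : ℝ) (u φ : V → ℝ) (x : V) :
    G.μ x * (c * G.gamma u φ x)
      = 2⁻¹ * ∑' y, c * (G.ω x y * (u y - u x) * (φ y - φ x)) := by
  rw [gamma, tsum_mul_left]
  field_simp [(G.mu_pos x).ne']

end WGraph

theorem integration_by_parts_general {V : Type*} (G : WGraph V) (p : ℝ)
    (u φ : V → ℝ) (hφ : (Function.support φ).Finite) :
    ∑' x, G.μ x * (G.lapP p u x * φ x)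
      = - ∑' x, G.μ x * (G.grad u x ^ (p - 2) * G.gamma u φ x) := by
  classical
  set A := G.closedNbhd hφ.toFinset
  simp only [G.mu_mul_lapP_mul, G.mu_mul_mul_gamma]
  rw [tsum_mul_left (a := 2⁻¹), tsum_mul_left (a := 2⁻¹),
    tsum_tsum_eq_sum_sum A A, tsum_tsum_eq_sum_sum A A,
    Finset.sum_sum_symm_weight_mul_sub A G.ω G.symm, mul_neg]
  · intro x y h
    have h' := right_ne_zero_of_mul h
    refine G.mem_closedNbhd_support_of_adj hφ (left_ne_zero_of_mul (left_ne_zero_of_mul h')) ?_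
    by_contra! hφxy
    exact right_ne_zero_of_mul h' (by rw [hφxy.1, hφxy.2, sub_self])
  · intro x y h
    have hw := left_ne_zero_of_mul (right_ne_zero_of_mul (left_ne_zero_of_mul h))
    exact G.mem_closedNbhd_support_of_adj hφ hw (.inl (right_ne_zero_of_mul h))

/-- integration by parts for the graph `p`-Laplacian:
for `p > 1` and `φ` of finite support,
`∑_{x∈V} μ(x)·Δ_p u(x)·φ(x) = −∑_{x∈V} μ(x)·|∇u|^{p−2}(x)·Γ(u,φ)(x)`. -/
theorem integration_by_parts {V : Type*} (G : WGraph V) (p : ℝ) (hp : 1 < p)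
    (u φ : V → ℝ) (hφ : (Function.support φ).Finite) :
    ∑' x, G.μ x * (G.lapP p u x * φ x)
      = - ∑' x, G.μ x * (G.grad u x ^ (p - 2) * G.gamma u φ x) :=
  integration_by_parts_general G p u φ hφ
end

section
/- Compactness core of Lemma 2.1: let s > 1, suppose μ(x) ≥ μ0 > 0 and h(x) ≥ h0 > 0 for all x ∈ V, and suppose h(x) → +∞ as dist(x,x0) → ∞ for some fixed x0 ∈ V (i.e., for every C > 0 there is R > 0 such that h(x) ≥ C whenever dist(x,x0) ≥ R). Let u_k, u : V → ℝ satisfy u_k(x) → u(x) for every x ∈ V and ∑_{x∈V} μ(x)h(x)|u_k(x)−u(x)|^s ≤ c0 for all k, for some constant c0 > 0. Then ∑_{x∈V} μ(x)|u_k(x)−u(x)|^s → 0 as k → ∞; consequently sup_{x∈V}|u_k(x)−u(x)| → 0 and (∑_{x∈V} μ(x)|u_k(x)−u(x)|^r)^{1/r} → 0 for every r ∈ [s,∞). -/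
open scoped BigOperators
open Filter Topology

/-!
Outside a finite ball the coercive weight `h` exceeds any given `C`, so the uniform bound
`∑ μ h |u_k - u|^s ≤ c0` makes the tail of `∑ μ |u_k - u|^s` at most `c0 / C` for every `k`;
on the finite ball the sum tends to `0` by pointwise convergence. Since `μ ≥ μ0 > 0`, each term is
controlled by the whole sum, which gives uniform convergence, and once `|u_k - u| ≤ 1` the
`ℓ^r` sums for `r ≥ s` are dominated by the `ℓ^s` sums.
-/

namespace SimpleGraph

theorem Connected.finite_setOf_dist_le {V : Type*} {G : SimpleGraph V} (hconn : G.Connected)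
    (hfin : ∀ x, (G.neighborSet x).Finite) (x0 : V) (n : ℕ) :
    {x | G.dist x x0 ≤ n}.Finite := by
  induction n with
  | zero => simp [hconn.dist_eq_zero_iff]
  | succ n ih =>
    refine (ih.union (ih.biUnion fun y _ => hfin y)).subset fun x hx => ?_
    obtain ⟨p, hp⟩ := (hconn x x0).exists_walk_length_eq_dist
    cases p with
    | nil => exact Or.inl (by simp)
    | @cons _ y _ hadj q =>
      have hq : G.dist y x0 ≤ n := by
        have hlen : (Walk.cons hadj q).length ≤ n + 1 := by rw [hp]; exact hx
        exact (dist_le q).trans (by simp only [Walk.length_cons] at hlen; omega)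
      exact Or.inr (Set.mem_biUnion hq hadj.symm)

theorem Connected.tendsto_cofinite_atTop_of_dist {V : Type*} {G : SimpleGraph V}
    (hconn : G.Connected) (hfin : ∀ x, (G.neighborSet x).Finite) (x0 : V) {h : V → ℝ}
    (hcoer : ∀ C : ℝ, 0 < C → ∃ R : ℕ, ∀ x, R ≤ G.dist x x0 → C ≤ h x) :
    Tendsto h cofinite atTop := by
  refine tendsto_atTop.2 fun C => ?_
  obtain ⟨R, hR⟩ := hcoer (max C 1) (by positivity)
  refine Filter.eventually_cofinite.2 ((hconn.finite_setOf_dist_le hfin x0 R).subset ?_)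
  intro x hx
  by_contra hfar
  exact hx ((le_max_left C 1).trans (hR x (not_le.1 hfar).le))

end SimpleGraph

section WeightedSums

variable {ι : Type*}

theorem summable_of_summable_mul_of_le {h f : ι → ℝ} {h0 : ℝ} (hh0 : 0 < h0)
    (hh : ∀ x, h0 ≤ h x) (hf0 : ∀ x, 0 ≤ f x) (hsum : Summable fun x => h x * f x) :
    Summable f :=
  (hsum.div_const h0).of_nonneg_of_le hf0 fun x => by
    rw [le_div_iff₀ hh0]
    nlinarith [hh x, hf0 x]

theorem exists_finset_tsum_compl_le_of_weighted {f : ℕ → ι → ℝ} {h : ι → ℝ} {c ε : ℝ}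
    (hc : 0 < c) (hε : 0 < ε) (hf0 : ∀ k x, 0 ≤ f k x) (hf : ∀ k, Summable (f k))
    (hh0 : ∀ x, 0 ≤ h x) (hh : Tendsto h cofinite atTop)
    (hsum : ∀ k, Summable fun x => h x * f k x) (hbd : ∀ k, ∑' x, h x * f k x ≤ c) :
    ∃ K : Finset ι, ∀ k, ∑' x : ↥((K : Set ι)ᶜ), f k x ≤ ε := by
  have hC : 0 < c / ε := div_pos hc hε
  have hlow : {x | ¬ c / ε ≤ h x}.Finite := Filter.eventually_cofinite.1 (hh.eventually_ge_atTop _)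
  refine ⟨hlow.toFinset, fun k => ?_⟩
  have hle : ∀ x : ↥((hlow.toFinset : Set ι)ᶜ), f k x ≤ h x * f k x / (c / ε) := fun x => by
    have hx : c / ε ≤ h x := by simpa using x.2
    rw [le_div_iff₀ hC]
    nlinarith [hf0 k x]
  calc ∑' x : ↥((hlow.toFinset : Set ι)ᶜ), f k x
      ≤ ∑' x : ↥((hlow.toFinset : Set ι)ᶜ), h x * f k x / (c / ε) :=
        Summable.tsum_le_tsum hle ((hf k).subtype _) (((hsum k).subtype _).div_const _)
    _ = (∑' x : ↥((hlow.toFinset : Set ι)ᶜ), h x * f k x) / (c / ε) := tsum_div_const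
    _ ≤ c / (c / ε) := by
        gcongr
        exact ((hsum k).tsum_subtype_le _ _ fun x => mul_nonneg (hh0 x) (hf0 k x)).trans (hbd k)
    _ = ε := by field_simp

theorem tendsto_tsum_zero_of_tendsto_of_tsum_compl_le {f : ℕ → ι → ℝ}
    (hf0 : ∀ k x, 0 ≤ f k x) (hf : ∀ k, Summable (f k))
    (hpt : ∀ x, Tendsto (fun k => f k x) atTop (𝓝 0))
    (htail : ∀ ε > 0, ∃ K : Finset ι, ∀ k, ∑' x : ↥((K : Set ι)ᶜ), f k x ≤ ε) :
    Tendsto (fun k => ∑' x, f k x) atTop (𝓝 0) := by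
  refine tendsto_order.2 ⟨fun a ha => Eventually.of_forall fun k =>
    ha.trans_le (tsum_nonneg (hf0 k)), fun ε hε => ?_⟩
  obtain ⟨K, hK⟩ := htail (ε / 2) (half_pos hε)
  have hfin : Tendsto (fun k => ∑ x ∈ K, f k x) atTop (𝓝 0) := by
    simpa using tendsto_finsetSum K fun x _ => hpt x
  filter_upwards [hfin.eventually (gt_mem_nhds (half_pos hε))] with k hk
  rw [← (hf k).sum_add_tsum_compl]
  linarith [hK k]

theorem eventually_forall_abs_lt_of_tendsto_tsum {l : Filter ℕ} {μ : ι → ℝ} {d : ℕ → ι → ℝ}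
    {μ0 s ε : ℝ} (hμ0 : 0 < μ0) (hμ : ∀ x, μ0 ≤ μ x) (hs : 0 < s) (hε : 0 < ε)
    (hsum : ∀ k, Summable fun x => μ x * |d k x| ^ s)
    (hlim : Tendsto (fun k => ∑' x, μ x * |d k x| ^ s) l (𝓝 0)) :
    ∀ᶠ k in l, ∀ x, |d k x| < ε := by
  filter_upwards [hlim.eventually (gt_mem_nhds (by positivity : 0 < μ0 * ε ^ s))] with k hk x
  have hterm : μ0 * |d k x| ^ s < μ0 * ε ^ s := calc
    μ0 * |d k x| ^ s ≤ μ x * |d k x| ^ s := by gcongr; exact hμ x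
    _ ≤ ∑' y, μ y * |d k y| ^ s := (hsum k).le_tsum x fun y _ =>
        mul_nonneg (hμ0.le.trans (hμ y)) (Real.rpow_nonneg (abs_nonneg _) _)
    _ < μ0 * ε ^ s := hk
  exact (Real.rpow_lt_rpow_iff (abs_nonneg _) hε.le hs).1 (lt_of_mul_lt_mul_left hterm hμ0.le)

theorem tendsto_tsum_rpow_of_abs_le_one {l : Filter ℕ} {μ : ι → ℝ} {d : ℕ → ι → ℝ} {s r : ℝ}
    (hμ : ∀ x, 0 ≤ μ x) (hs : 0 ≤ s) (hsr : s ≤ r) (hd : ∀ᶠ k in l, ∀ x, |d k x| ≤ 1)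
    (hsum : ∀ k, Summable fun x => μ x * |d k x| ^ s)
    (hlim : Tendsto (fun k => ∑' x, μ x * |d k x| ^ s) l (𝓝 0)) :
    Tendsto (fun k => ∑' x, μ x * |d k x| ^ r) l (𝓝 0) := by
  refine tendsto_of_tendsto_of_tendsto_of_le_of_le' tendsto_const_nhds hlim
    (Eventually.of_forall fun k => tsum_nonneg fun x => mul_nonneg (hμ x) (Real.rpow_nonneg (abs_nonneg _) _)) ?_
  filter_upwards [hd] with k hk
  have hle : ∀ x, μ x * |d k x| ^ r ≤ μ x * |d k x| ^ s := fun x => by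
    gcongr ?_ * ?_
    · exact hμ x
    · exact Real.rpow_le_rpow_of_exponent_ge' (abs_nonneg _) (hk x) hs hsr
  exact (hsum k).of_nonneg_of_le (fun x => mul_nonneg (hμ x) (Real.rpow_nonneg (abs_nonneg _) _)) hle |>.tsum_le_tsum hle (hsum k)

end WeightedSums

/-- compactness core of Lemma 2.1. If `h ≥ h0 > 0` is coercive
(`h(x) → ∞` as `dist(x,x0) → ∞`), `u_k → u` pointwise and
`∑_{x∈V} μ(x)h(x)|u_k(x)−u(x)|^s ≤ c0` for all `k`, then
`∑_{x∈V} μ(x)|u_k(x)−u(x)|^s → 0`, hence `sup_{x∈V}|u_k(x)−u(x)| → 0` and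
`(∑_{x∈V} μ(x)|u_k(x)−u(x)|^r)^{1/r} → 0` for every `r ∈ [s,∞)`. -/
theorem compact_embedding_core {V : Type*} (G : WGraph V)
    (hconn : G.toSimpleGraph.Connected) (s : ℝ) (hs : 1 < s)
    (h : V → ℝ) (μ0 h0 : ℝ) (hμ0 : 0 < μ0) (hh0 : 0 < h0)
    (hμ : ∀ x, μ0 ≤ G.μ x) (hh : ∀ x, h0 ≤ h x)
    (x0 : V)
    (hcoer : ∀ C : ℝ, 0 < C → ∃ R : ℕ, 0 < R ∧ ∀ x, R ≤ G.dist x x0 → C ≤ h x)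
    (u : ℕ → V → ℝ) (w : V → ℝ)
    (hpt : ∀ x, Tendsto (fun k => u k x) atTop (𝓝 (w x)))
    (c0 : ℝ) (hc0 : 0 < c0)
    (hsum : ∀ k, Summable fun x => G.μ x * h x * |u k x - w x| ^ s)
    (hbd : ∀ k, ∑' x, G.μ x * h x * |u k x - w x| ^ s ≤ c0) :
    Tendsto (fun k => ∑' x, G.μ x * |u k x - w x| ^ s) atTop (𝓝 0) ∧
    (∀ ε : ℝ, 0 < ε → ∃ N : ℕ, ∀ k, N ≤ k → ∀ x, |u k x - w x| < ε) ∧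
    (∀ r : ℝ, s ≤ r →
      Tendsto (fun k => (∑' x, G.μ x * |u k x - w x| ^ r) ^ (1 / r)) atTop (𝓝 0)) := by
  have hs0 : 0 < s := one_pos.trans hs
  have hweight : ∀ k x, G.μ x * h x * |u k x - w x| ^ s = h x * (G.μ x * |u k x - w x| ^ s) :=
    fun _ _ => by ring
  simp only [hweight] at hsum hbd
  have hnn : ∀ k x, 0 ≤ G.μ x * |u k x - w x| ^ s := fun k x =>
    mul_nonneg (G.mu_pos x).le (Real.rpow_nonneg (abs_nonneg _) s)
  have hsumf : ∀ k, Summable fun x => G.μ x * |u k x - w x| ^ s := fun k =>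
    summable_of_summable_mul_of_le hh0 hh (hnn k) (hsum k)
  have hpt' : ∀ x, Tendsto (fun k => G.μ x * |u k x - w x| ^ s) atTop (𝓝 0) := fun x => by
    simpa [Real.zero_rpow hs0.ne'] using
      (((hpt x).sub_const (w x)).abs.rpow_const (Or.inr hs0.le)).const_mul (G.μ x)
  have hcof : Tendsto h cofinite atTop :=
    hconn.tendsto_cofinite_atTop_of_dist G.locFin x0 fun C hC => (hcoer C hC).imp fun _ hR => hR.2
  have hls : Tendsto (fun k => ∑' x, G.μ x * |u k x - w x| ^ s) atTop (𝓝 0) :=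
    tendsto_tsum_zero_of_tendsto_of_tsum_compl_le hnn hsumf hpt' fun ε hε =>
      exists_finset_tsum_compl_le_of_weighted hc0 hε hnn hsumf (fun x => hh0.le.trans (hh x))
        hcof hsum hbd
  have hunif : ∀ ε > 0, ∀ᶠ k in atTop, ∀ x, |u k x - w x| < ε := fun ε hε =>
    eventually_forall_abs_lt_of_tendsto_tsum hμ0 hμ hs0 hε hsumf hls
  refine ⟨hls, fun ε hε => eventually_atTop.1 (hunif ε hε), fun r hr => ?_⟩
  have hr0 : 0 < 1 / r := one_div_pos.2 (hs0.trans_le hr)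
  have hlr := tendsto_tsum_rpow_of_abs_le_one (fun x => (G.mu_pos x).le) hs0.le hr
    ((hunif 1 one_pos).mono fun k hk x => (hk x).le) hsumf hls
  simpa only [Real.zero_rpow hr0.ne'] using hlr.rpow_const (Or.inr hr0.le)
end

section
/- Compactness core of Lemma 2.2: let s > 1, suppose μ(x) ≥ μ0 > 0 and h(x) ≥ h0 > 0 for all x ∈ V, and suppose that for every constant B > 0 one has ∑_{x ∈ V, h(x) ≤ B} μ(x) < ∞. Let u_k : V → ℝ satisfy ∑_{x∈V} μ(x)(|∇u_k|^s(x) + h(x)|u_k(x)|^s) ≤ C0^s for all k, for some constant C0 > 0, and suppose u_k(x) → u(x) for every x ∈ V, where u satisfies ∑_{x∈V} μ(x)(|∇u|^s(x)+h(x)|u(x)|^s) < ∞. Then ∑_{x∈V} μ(x)|u_k(x)|^s → ∑_{x∈V} μ(x)|u(x)|^s as k → ∞; consequently ∑_{x∈V} μ(x)|u_k(x)−u(x)|^s → 0, sup_{x∈V}|u_k(x)−u(x)| → 0, and (∑_{x∈V} μ(x)|u_k(x)−u(x)|^r)^{1/r} → 0 for every r ∈ [s,∞). -/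
open scoped BigOperators
open Filter Topology

/-!
Everything is controlled by the potential part `∑ μ h |u|^s ≤ C` of the Sobolev sum. Since
`μ ≥ μ0` and `h ≥ h0`, it bounds `|u|^s` pointwise by `C / (μ0 h0)`; and on `{h > B}` it gives
`μ |u|^s ≤ μ h |u|^s / B`, so the mass of `μ |u_k|^s` outside the sublevel set `{h ≤ B}` is at
most `C / B`, uniformly in `k`. The sublevel set has finite `μ`-mass, so there the pointwise bound
dominates `μ |u_k|^s` by a multiple of `μ` and dominated convergence applies; letting `B → ∞`
gives `∑ μ |u_k|^s → ∑ μ |w|^s`. The same argument for `u_k - w` gives `L^s` convergence, which is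
uniform because `μ ≥ μ0`, and once `|u_k - w| ≤ 1` the `L^r` sums for `r ≥ s` are dominated by
the `L^s` sums.
-/

lemma mul_le_inv_mul_mul_of_le {m a B t : ℝ} (hm : 0 ≤ m) (ha : 0 ≤ a) (hB : 0 < B)
    (ht : B ≤ t) : m * a ≤ B⁻¹ * (m * (t * a)) := by
  rw [inv_mul_eq_div, le_div_iff₀ hB]
  nlinarith [mul_le_mul_of_nonneg_left ht (mul_nonneg hm ha)]

lemma abs_sub_rpow_le {s : ℝ} (hs : 1 ≤ s) (a b : ℝ) :
    |a - b| ^ s ≤ 2 ^ (s - 1) * (|a| ^ s + |b| ^ s) := by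
  have h := NNReal.rpow_add_le_mul_rpow_add_rpow ‖a‖₊ ‖b‖₊ hs
  have h' : (|a| + |b|) ^ s ≤ 2 ^ (s - 1) * (|a| ^ s + |b| ^ s) := by exact_mod_cast h
  exact (Real.rpow_le_rpow (abs_nonneg _) (abs_sub _ _) (by linarith)).trans h'

lemma tendsto_of_forall_approx {ι α : Type*} [PseudoMetricSpace α] {l : Filter ι}
    {f : ι → α} {a : α}
    (h : ∀ ε > 0, ∃ (g : ι → α) (b : α),
      Tendsto g l (𝓝 b) ∧ (∀ i, dist (f i) (g i) ≤ ε) ∧ dist a b ≤ ε) :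
    Tendsto f l (𝓝 a) := by
  refine Metric.tendsto_nhds.2 fun ε hε => ?_
  obtain ⟨g, b, hg, hfg, hab⟩ := h (ε / 3) (by positivity)
  filter_upwards [Metric.tendsto_nhds.1 hg (ε / 3) (by positivity)] with i hi
  calc dist (f i) a ≤ dist (f i) (g i) + dist (g i) b + dist b a := dist_triangle4 _ _ _ _
    _ < ε := by rw [dist_comm b a]; linarith [hfg i]

section WeightedSums

variable {V : Type*} {m h a : V → ℝ} {B D : ℝ}

lemma summable_sublevel_mul (hm : ∀ x, 0 ≤ m x) (ha : ∀ x, 0 ≤ a x) (hD : ∀ x, a x ≤ D)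
    (hfin : Summable fun x : ↥{x | h x ≤ B} => m x) :
    Summable fun x : ↥{x | h x ≤ B} => m x * a x :=
  (hfin.mul_right D).of_nonneg_of_le (fun x => mul_nonneg (hm x) (ha x))
    fun x => mul_le_mul_of_nonneg_left (hD x) (hm x)

lemma summable_compl_sublevel_mul (hm : ∀ x, 0 ≤ m x) (ha : ∀ x, 0 ≤ a x) (hB : 0 < B)
    (hsum : Summable fun x => m x * (h x * a x)) :
    Summable fun x : ↥{x | h x ≤ B}ᶜ => m x * a x :=
  ((hsum.subtype _).mul_left B⁻¹).of_nonneg_of_le (fun x => mul_nonneg (hm x) (ha x))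
    fun x => mul_le_inv_mul_mul_of_le (hm x) (ha x) hB (le_of_not_ge x.2)

lemma tsum_compl_sublevel_mul_le (hm : ∀ x, 0 ≤ m x) (hh : ∀ x, 0 ≤ h x) (ha : ∀ x, 0 ≤ a x)
    (hB : 0 < B) (hsum : Summable fun x => m x * (h x * a x)) :
    ∑' x : ↥{x | h x ≤ B}ᶜ, m x * a x ≤ (∑' x, m x * (h x * a x)) / B := by
  rw [div_eq_inv_mul]
  calc ∑' x : ↥{x | h x ≤ B}ᶜ, m x * a x
      ≤ ∑' x : ↥{x | h x ≤ B}ᶜ, B⁻¹ * (m x * (h x * a x)) :=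
        (summable_compl_sublevel_mul hm ha hB hsum).tsum_le_tsum
          (fun x => mul_le_inv_mul_mul_of_le (hm x) (ha x) hB (le_of_not_ge x.2))
          ((hsum.subtype _).mul_left B⁻¹)
    _ ≤ B⁻¹ * ∑' x, m x * (h x * a x) := by
      rw [tsum_mul_left]
      gcongr
      exact hsum.tsum_subtype_le _ _ fun x => mul_nonneg (hm x) (mul_nonneg (hh x) (ha x))

lemma summable_mul_of_summable_mul_mul {h0 : ℝ} (hh0 : 0 < h0) (hh : ∀ x, h0 ≤ h x)
    (hm : ∀ x, 0 ≤ m x) (ha : ∀ x, 0 ≤ a x) (hsum : Summable fun x => m x * (h x * a x)) :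
    Summable fun x => m x * a x :=
  (hsum.mul_left h0⁻¹).of_nonneg_of_le (fun x => mul_nonneg (hm x) (ha x))
    fun x => mul_le_inv_mul_mul_of_le (hm x) (ha x) hh0 (hh x)

lemma dist_tsum_tsum_sublevel_le (hm : ∀ x, 0 ≤ m x) (hh : ∀ x, 0 ≤ h x) (ha : ∀ x, 0 ≤ a x)
    (hD : ∀ x, a x ≤ D) (hB : 0 < B) (hfin : Summable fun x : ↥{x | h x ≤ B} => m x)
    (hsum : Summable fun x => m x * (h x * a x)) :
    dist (∑' x, m x * a x) (∑' x : ↥{x | h x ≤ B}, m x * a x) ≤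
      (∑' x, m x * (h x * a x)) / B := by
  have hsplit := Summable.tsum_add_tsum_compl (f := fun x => m x * a x) (s := {x | h x ≤ B})
    (summable_sublevel_mul hm ha hD hfin) (summable_compl_sublevel_mul hm ha hB hsum)
  have htail := tsum_compl_sublevel_mul_le hm hh ha hB hsum
  have htail0 : 0 ≤ ∑' x : ↥{x | h x ≤ B}ᶜ, m x * a x :=
    tsum_nonneg fun x => mul_nonneg (hm x) (ha x)
  rw [Real.dist_eq, ← hsplit, add_sub_cancel_left, abs_of_nonneg htail0]
  exact htail

theorem tendsto_tsum_mul_of_tsum_mul_mul_le {a : ℕ → V → ℝ} {b : V → ℝ} {C : ℝ}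
    (hm : ∀ x, 0 ≤ m x) (hh : ∀ x, 0 ≤ h x) (ha : ∀ k x, 0 ≤ a k x) (hD : ∀ k x, a k x ≤ D)
    (hfin : ∀ B, 0 < B → Summable fun x : ↥{x | h x ≤ B} => m x)
    (hsum : ∀ k, Summable fun x => m x * (h x * a k x))
    (hC : ∀ k, ∑' x, m x * (h x * a k x) ≤ C)
    (hsumb : Summable fun x => m x * (h x * b x))
    (hlim : ∀ x, Tendsto (fun k => a k x) atTop (𝓝 (b x))) :
    Tendsto (fun k => ∑' x, m x * a k x) atTop (𝓝 (∑' x, m x * b x)) := by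
  have hb : ∀ x, 0 ≤ b x := fun x => ge_of_tendsto' (hlim x) fun k => ha k x
  have hbD : ∀ x, b x ≤ D := fun x => le_of_tendsto' (hlim x) fun k => hD k x
  refine tendsto_of_forall_approx fun ε hε => ?_
  have hdecay : ∀ c : ℝ, ∀ᶠ B in atTop, c / B < ε := fun c =>
    (tendsto_const_nhds.div_atTop tendsto_id).eventually (gt_mem_nhds hε)
  obtain ⟨B, hB, hCB, hbB⟩ :=
    ((eventually_gt_atTop 0).and ((hdecay C).and (hdecay (∑' x, m x * (h x * b x))))).exists
  refine ⟨fun k => ∑' x : ↥{x | h x ≤ B}, m x * a k x, ∑' x : ↥{x | h x ≤ B}, m x * b x,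
    ?_, fun k => ?_, ?_⟩
  · refine tendsto_tsum_of_dominated_convergence ((hfin B hB).mul_right D)
      (fun x => (hlim x).const_mul _) (Eventually.of_forall fun k x => ?_)
    rw [Real.norm_of_nonneg (mul_nonneg (hm x) (ha k x))]
    exact mul_le_mul_of_nonneg_left (hD k x) (hm x)
  · calc _ ≤ (∑' x, m x * (h x * a k x)) / B :=
          dist_tsum_tsum_sublevel_le hm hh (ha k) (hD k) hB (hfin B hB) (hsum k)
      _ ≤ C / B := by gcongr; exact hC k
      _ ≤ ε := hCB.le
  · exact (dist_tsum_tsum_sublevel_le hm hh hb hbD hB (hfin B hB) hsumb).trans hbB.le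

lemma le_div_of_tsum_mul_mul_le {μ0 h0 C : ℝ} (hμ0 : 0 < μ0) (hh0 : 0 < h0)
    (hm : ∀ x, μ0 ≤ m x) (hh : ∀ x, h0 ≤ h x) (ha : ∀ x, 0 ≤ a x)
    (hsum : Summable fun x => m x * (h x * a x)) (hC : ∑' x, m x * (h x * a x) ≤ C) (x : V) :
    a x ≤ C / (μ0 * h0) := by
  have hterm : m x * (h x * a x) ≤ C := (hsum.le_tsum x fun y _ =>
    mul_nonneg (hμ0.le.trans (hm y)) (mul_nonneg (hh0.le.trans (hh y)) (ha y))).trans hC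
  rw [le_div_iff₀ (mul_pos hμ0 hh0)]
  calc a x * (μ0 * h0) = μ0 * (h0 * a x) := by ring
    _ ≤ m x * (h x * a x) := mul_le_mul (hm x) (mul_le_mul_of_nonneg_right (hh x) (ha x))
        (mul_nonneg hh0.le (ha x)) (hμ0.le.trans (hm x))
    _ ≤ C := hterm

theorem tendsto_tsum_mul_abs_rpow_of_tsum_mul_mul_le {f : ℕ → V → ℝ} {g : V → ℝ}
    {μ0 h0 s C : ℝ} (hμ0 : 0 < μ0) (hh0 : 0 < h0) (hm : ∀ x, μ0 ≤ m x) (hh : ∀ x, h0 ≤ h x)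
    (hs : 0 < s) (hfin : ∀ B, 0 < B → Summable fun x : ↥{x | h x ≤ B} => m x)
    (hsum : ∀ k, Summable fun x => m x * (h x * |f k x| ^ s))
    (hC : ∀ k, ∑' x, m x * (h x * |f k x| ^ s) ≤ C)
    (hsumg : Summable fun x => m x * (h x * |g x| ^ s))
    (hlim : ∀ x, Tendsto (fun k => f k x) atTop (𝓝 (g x))) :
    Tendsto (fun k => ∑' x, m x * |f k x| ^ s) atTop (𝓝 (∑' x, m x * |g x| ^ s)) :=
  have hpos : ∀ (f : V → ℝ) x, 0 ≤ |f x| ^ s := fun _ _ => Real.rpow_nonneg (abs_nonneg _) s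
  tendsto_tsum_mul_of_tsum_mul_mul_le (fun x => hμ0.le.trans (hm x))
    (fun x => hh0.le.trans (hh x)) (fun k => hpos (f k))
    (fun k => le_div_of_tsum_mul_mul_le hμ0 hh0 hm hh (hpos (f k)) (hsum k) (hC k))
    hfin hsum hC hsumg fun x => (hlim x).abs.rpow_const (Or.inr hs.le)

lemma mul_mul_abs_sub_rpow_le {s : ℝ} {f g : V → ℝ} (hm : ∀ x, 0 ≤ m x) (hh : ∀ x, 0 ≤ h x)
    (hs : 1 ≤ s) (x : V) : m x * (h x * |f x - g x| ^ s) ≤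
      2 ^ (s - 1) * (m x * (h x * |f x| ^ s) + m x * (h x * |g x| ^ s)) :=
  calc m x * (h x * |f x - g x| ^ s)
      ≤ m x * (h x * (2 ^ (s - 1) * (|f x| ^ s + |g x| ^ s))) := by
        gcongr
        · exact hm x
        · exact hh x
        · exact abs_sub_rpow_le hs _ _
    _ = _ := by ring

lemma summable_mul_mul_abs_sub_rpow {s : ℝ} {f g : V → ℝ} (hm : ∀ x, 0 ≤ m x)
    (hh : ∀ x, 0 ≤ h x) (hs : 1 ≤ s) (hf : Summable fun x => m x * (h x * |f x| ^ s))
    (hg : Summable fun x => m x * (h x * |g x| ^ s)) :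
    Summable fun x => m x * (h x * |f x - g x| ^ s) :=
  ((hf.add hg).mul_left _).of_nonneg_of_le (fun x => by have := hm x; have := hh x; positivity)
    (mul_mul_abs_sub_rpow_le hm hh hs)

lemma tsum_mul_mul_abs_sub_rpow_le {s : ℝ} {f g : V → ℝ} (hm : ∀ x, 0 ≤ m x)
    (hh : ∀ x, 0 ≤ h x) (hs : 1 ≤ s) (hf : Summable fun x => m x * (h x * |f x| ^ s))
    (hg : Summable fun x => m x * (h x * |g x| ^ s)) :
    ∑' x, m x * (h x * |f x - g x| ^ s) ≤
      2 ^ (s - 1) * (∑' x, m x * (h x * |f x| ^ s) + ∑' x, m x * (h x * |g x| ^ s)) := by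
  rw [← hf.tsum_add hg, ← tsum_mul_left]
  exact (summable_mul_mul_abs_sub_rpow hm hh hs hf hg).tsum_le_tsum
    (mul_mul_abs_sub_rpow_le hm hh hs) ((hf.add hg).mul_left _)

lemma exists_forall_abs_lt_of_tendsto_tsum {d : ℕ → V → ℝ} {μ0 s : ℝ} (hμ0 : 0 < μ0)
    (hm : ∀ x, μ0 ≤ m x) (hs : 0 < s) (hsum : ∀ k, Summable fun x => m x * |d k x| ^ s)
    (hlim : Tendsto (fun k => ∑' x, m x * |d k x| ^ s) atTop (𝓝 0)) :
    ∀ ε : ℝ, 0 < ε → ∃ N : ℕ, ∀ k, N ≤ k → ∀ x, |d k x| < ε := by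
  intro ε hε
  obtain ⟨N, hN⟩ := eventually_atTop.1 (hlim.eventually (gt_mem_nhds (by positivity :
    0 < μ0 * ε ^ s)))
  refine ⟨N, fun k hk x => ?_⟩
  have hterm : m x * |d k x| ^ s ≤ ∑' y, m y * |d k y| ^ s := (hsum k).le_tsum x fun y _ =>
    mul_nonneg (hμ0.le.trans (hm y)) (Real.rpow_nonneg (abs_nonneg _) s)
  have hpow : μ0 * |d k x| ^ s < μ0 * ε ^ s :=
    calc μ0 * |d k x| ^ s ≤ m x * |d k x| ^ s := by gcongr; exact hm x
      _ < μ0 * ε ^ s := hterm.trans_lt (hN k hk)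
  exact (Real.rpow_lt_rpow_iff (abs_nonneg _) hε.le hs).1 (lt_of_mul_lt_mul_left hpow hμ0.le)

lemma tendsto_tsum_mul_abs_rpow_of_le {d : ℕ → V → ℝ} {s r : ℝ} (hm : ∀ x, 0 ≤ m x)
    (hs : 0 ≤ s) (hsr : s ≤ r) (hsum : ∀ k, Summable fun x => m x * |d k x| ^ s)
    (hsmall : ∀ᶠ k in atTop, ∀ x, |d k x| ≤ 1)
    (hlim : Tendsto (fun k => ∑' x, m x * |d k x| ^ s) atTop (𝓝 0)) :
    Tendsto (fun k => ∑' x, m x * |d k x| ^ r) atTop (𝓝 0) := by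
  refine squeeze_zero' (Eventually.of_forall fun k => tsum_nonneg fun x =>
    mul_nonneg (hm x) (Real.rpow_nonneg (abs_nonneg _) r)) (hsmall.mono fun k hk => ?_) hlim
  have hle : ∀ x, m x * |d k x| ^ r ≤ m x * |d k x| ^ s := fun x =>
    mul_le_mul_of_nonneg_left
      (Real.rpow_le_rpow_of_exponent_ge' (abs_nonneg _) (hk x) hs hsr) (hm x)
  exact ((hsum k).of_nonneg_of_le (fun x =>
    mul_nonneg (hm x) (Real.rpow_nonneg (abs_nonneg _) r)) hle).tsum_le_tsum hle (hsum k)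

end WeightedSums

namespace WGraph

variable {V : Type*} {G : WGraph V} {h : V → ℝ} {s : ℝ} {u : V → ℝ}

lemma mul_mul_abs_rpow_le_sobolev_term (x : V) :
    G.μ x * (h x * |u x| ^ s) ≤ G.μ x * (G.grad u x ^ s + h x * |u x| ^ s) :=
  mul_le_mul_of_nonneg_left (le_add_of_nonneg_left (Real.rpow_nonneg (Real.sqrt_nonneg _) s))
    (G.mu_pos x).le

lemma SobSummable.summable_potential (hh : ∀ x, 0 ≤ h x) (hu : G.SobSummable h s u) :
    Summable fun x => G.μ x * (h x * |u x| ^ s) :=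
  Summable.of_nonneg_of_le
    (fun x => mul_nonneg (G.mu_pos x).le (mul_nonneg (hh x) (Real.rpow_nonneg (abs_nonneg _) s)))
    mul_mul_abs_rpow_le_sobolev_term hu

lemma SobSummable.tsum_potential_le (hh : ∀ x, 0 ≤ h x) (hu : G.SobSummable h s u) :
    ∑' x, G.μ x * (h x * |u x| ^ s) ≤ G.sobSum h s u :=
  (hu.summable_potential hh).tsum_le_tsum mul_mul_abs_rpow_le_sobolev_term hu

end WGraph

theorem compact_embedding_core'_general {V : Type*} (G : WGraph V)
    (s : ℝ) (hs : 1 < s)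
    (h : V → ℝ) (μ0 h0 : ℝ) (hμ0 : 0 < μ0) (hh0 : 0 < h0)
    (hμ : ∀ x, μ0 ≤ G.μ x) (hh : ∀ x, h0 ≤ h x)
    (hH2' : ∀ B : ℝ, 0 < B → Summable fun x : {x : V // h x ≤ B} => G.μ x)
    (u : ℕ → V → ℝ) (C0 : ℝ)
    (hsum : ∀ k, G.SobSummable h s (u k))
    (hbd : ∀ k, G.sobSum h s (u k) ≤ C0 ^ s)
    (w : V → ℝ) (hpt : ∀ x, Tendsto (fun k => u k x) atTop (𝓝 (w x)))
    (hw : G.SobSummable h s w) :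
    Tendsto (fun k => ∑' x, G.μ x * |u k x| ^ s) atTop (𝓝 (∑' x, G.μ x * |w x| ^ s)) ∧
    Tendsto (fun k => ∑' x, G.μ x * |u k x - w x| ^ s) atTop (𝓝 0) ∧
    (∀ ε : ℝ, 0 < ε → ∃ N : ℕ, ∀ k, N ≤ k → ∀ x, |u k x - w x| < ε) ∧
    (∀ r : ℝ, s ≤ r →
      Tendsto (fun k => (∑' x, G.μ x * |u k x - w x| ^ r) ^ (1 / r)) atTop (𝓝 0)) := by
  have hs0 : 0 < s := one_pos.trans hs
  have hm : ∀ x, 0 ≤ G.μ x := fun x => (G.mu_pos x).le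
  have hh' : ∀ x, 0 ≤ h x := fun x => hh0.le.trans (hh x)
  set C := max (C0 ^ s) (G.sobSum h s w)
  have hPu : ∀ k, ∑' x, G.μ x * (h x * |u k x| ^ s) ≤ C := fun k =>
    ((hsum k).tsum_potential_le hh').trans ((hbd k).trans (le_max_left _ _))
  have hPw : ∑' x, G.μ x * (h x * |w x| ^ s) ≤ C :=
    (hw.tsum_potential_le hh').trans (le_max_right _ _)
  have hPd : ∀ k, ∑' x, G.μ x * (h x * |u k x - w x| ^ s) ≤ 2 ^ (s - 1) * (C + C) := fun k =>
    (tsum_mul_mul_abs_sub_rpow_le hm hh' hs.le ((hsum k).summable_potential hh')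
      (hw.summable_potential hh')).trans
      (mul_le_mul_of_nonneg_left (add_le_add (hPu k) hPw) (by positivity))
  have hSd : ∀ k, Summable fun x => G.μ x * (h x * |u k x - w x| ^ s) := fun k =>
    summable_mul_mul_abs_sub_rpow hm hh' hs.le ((hsum k).summable_potential hh')
      (hw.summable_potential hh')
  have hconv := tendsto_tsum_mul_abs_rpow_of_tsum_mul_mul_le hμ0 hh0 hμ hh hs0 hH2'
    (fun k => (hsum k).summable_potential hh') hPu (hw.summable_potential hh') hpt
  have hconv_d : Tendsto (fun k => ∑' x, G.μ x * |u k x - w x| ^ s) atTop (𝓝 0) := by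
    simpa [Real.zero_rpow hs0.ne'] using
      tendsto_tsum_mul_abs_rpow_of_tsum_mul_mul_le (g := fun _ => 0) hμ0 hh0 hμ hh hs0 hH2' hSd
        hPd (by simp [Real.zero_rpow hs0.ne']) fun x => by simpa using (hpt x).sub_const (w x)
  have hSd' : ∀ k, Summable fun x => G.μ x * |u k x - w x| ^ s := fun k =>
    summable_mul_of_summable_mul_mul hh0 hh hm (fun x => Real.rpow_nonneg (abs_nonneg _) s)
      (hSd k)
  have hunif := exists_forall_abs_lt_of_tendsto_tsum hμ0 hμ hs0 hSd' hconv_d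
  refine ⟨hconv, hconv_d, hunif, fun r hr => ?_⟩
  obtain ⟨N, hN⟩ := hunif 1 one_pos
  have hsmall : ∀ᶠ k in atTop, ∀ x, |u k x - w x| ≤ 1 :=
    eventually_atTop.2 ⟨N, fun k hk x => (hN k hk x).le⟩
  have hconv_r := tendsto_tsum_mul_abs_rpow_of_le hm hs0.le hr hSd' hsmall hconv_d
  have hr0 : 0 < 1 / r := one_div_pos.2 (hs0.trans_le hr)
  simpa only [Real.zero_rpow hr0.ne'] using hconv_r.rpow_const (p := 1 / r) (Or.inr hr0.le)

/-- compactness core of Lemma 2.2. Under `μ ≥ μ0 > 0`, `h ≥ h0 > 0` and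
condition (H2') (`∑_{h(x)≤B} μ(x) < ∞` for every `B > 0`), if the Sobolev norms of `u_k`
are uniformly bounded by `C0` and `u_k → u` pointwise with `u` of finite Sobolev norm,
then `∑ μ|u_k|^s → ∑ μ|u|^s`; consequently `∑ μ|u_k−u|^s → 0`, `sup|u_k−u| → 0` and
`(∑ μ|u_k−u|^r)^{1/r} → 0` for every `r ∈ [s,∞)`. -/
theorem compact_embedding_core' {V : Type*} (G : WGraph V)
    (hconn : G.toSimpleGraph.Connected) (s : ℝ) (hs : 1 < s)
    (h : V → ℝ) (μ0 h0 : ℝ) (hμ0 : 0 < μ0) (hh0 : 0 < h0)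
    (hμ : ∀ x, μ0 ≤ G.μ x) (hh : ∀ x, h0 ≤ h x)
    (hH2' : ∀ B : ℝ, 0 < B → Summable fun x : {x : V // h x ≤ B} => G.μ x)
    (u : ℕ → V → ℝ) (C0 : ℝ) (hC0 : 0 < C0)
    (hsum : ∀ k, G.SobSummable h s (u k))
    (hbd : ∀ k, G.sobSum h s (u k) ≤ C0 ^ s)
    (w : V → ℝ) (hpt : ∀ x, Tendsto (fun k => u k x) atTop (𝓝 (w x)))
    (hw : G.SobSummable h s w) :
    Tendsto (fun k => ∑' x, G.μ x * |u k x| ^ s) atTop (𝓝 (∑' x, G.μ x * |w x| ^ s)) ∧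
    Tendsto (fun k => ∑' x, G.μ x * |u k x - w x| ^ s) atTop (𝓝 0) ∧
    (∀ ε : ℝ, 0 < ε → ∃ N : ℕ, ∀ k, N ≤ k → ∀ x, |u k x - w x| < ε) ∧
    (∀ r : ℝ, s ≤ r →
      Tendsto (fun k => (∑' x, G.μ x * |u k x - w x| ^ r) ^ (1 / r)) atTop (𝓝 0)) :=
  compact_embedding_core'_general G s hs h μ0 h0 hμ0 hh0 hμ hh hH2' u C0 hsum hbd w hpt hw
end

section
/- Key estimate of Lemma 3.1: let p, q ≥ 2, suppose μ(x) ≥ μ0 > 0 and h1(x), h2(x) ≥ h0 > 0 for all x ∈ V, and let F : V × ℝ² → ℝ be continuously differentiable in (s,t) with F(x,0,0) = 0 and satisfy: there are f1, f2 : V → [0,∞) bounded and g1 ∈ L^{p/(p−1)}(V), g2 ∈ L^{q/(q−1)}(V) with |F_s(x,s,t)| ≤ f1(x)(|s|^{p−1}+|t|^{q(p−1)/p}) + g1(x) and |F_t(x,s,t)| ≤ f2(x)(|s|^p+|t|^{q−1}) + g2(x) for all x, s, t. Then for all u, v : V → ℝ with finite norms ‖u‖ := ‖u‖_{W_{h1}^{1,p}}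 < ∞ and ‖v‖ := ‖v‖_{W_{h2}^{1,q}} < ∞, the sum ∑_{x∈V} μ(x)|F(x,u(x),v(x))| converges and is bounded above by (2‖f1‖_∞/(p·h0))‖u‖^p + ((p−1)‖f1‖_∞/(p·h0) + ‖f2‖_∞/(q·h0))‖v‖^q + h0^{−1/p}‖g1‖_{L^{p/(p−1)}(V)}‖u‖ + h0^{−1/q}‖g2‖_{L^{q/(q−1)}(V)}‖v‖. -/
/-! Integrating `F_s` along the segment from `(0,t)` to `(s,t)` and `F_t` along the segment from
`(0,0)` to `(0,t)` bounds `|F(x,s,t)|` by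
`(2 f₁/p)|s|^p + ((p-1) f₁/p + f₂/q)|t|^q + g₁|s| + g₂|t|`,
the mixed term `f₁|s||t|^{q(p-1)/p}` being split by Young's inequality with exponents `p` and
`p/(p-1)`. Against `μ`, the `|u|^p` and `|v|^q` terms are controlled by the Sobolev sums because
`h₁, h₂ ≥ h₀`, and the `g`-terms by Hölder's inequality for the weighted sums. -/

open scoped BigOperators
open Filter Topology

open MeasureTheory

theorem abs_sub_le_of_abs_deriv_le_rpow {φ φ' : ℝ → ℝ} {a b e : ℝ} (he : 0 ≤ e)
    (hφ : ∀ z, HasDerivAt φ (φ' z) z) (hφ' : Continuous φ')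
    (hbound : ∀ z, |φ' z| ≤ a * |z| ^ e + b) (s : ℝ) :
    |φ s - φ 0| ≤ a * |s| ^ (e + 1) / (e + 1) + b * |s| := by
  have hderiv : ∀ r, HasDerivAt (fun r => φ (r * s)) (φ' (r * s) * s) r := fun r =>
    (hφ (r * s)).comp r (hasDerivAt_mul_const s)
  have hcont : Continuous fun r => φ' (r * s) * s := by fun_prop
  have hpow : IntervalIntegrable (fun r : ℝ => r ^ e) volume 0 1 :=
    intervalIntegral.intervalIntegrable_rpow' (by linarith)
  have hftc : ∫ r in (0 : ℝ)..1, φ' (r * s) * s = φ s - φ 0 := by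
    rw [intervalIntegral.integral_eq_sub_of_hasDerivAt (fun r _ => hderiv r)
      (hcont.intervalIntegrable 0 1)]
    simp
  calc |φ s - φ 0| = |∫ r in (0 : ℝ)..1, φ' (r * s) * s| := by rw [hftc]
    _ ≤ ∫ r in (0 : ℝ)..1, |φ' (r * s) * s| :=
      intervalIntegral.abs_integral_le_integral_abs zero_le_one
    _ ≤ ∫ r in (0 : ℝ)..1, (a * |s| ^ e * |s| * r ^ e + b * |s|) := by
      refine intervalIntegral.integral_mono_on zero_le_one (hcont.abs.intervalIntegrable 0 1)
        ((hpow.const_mul _).add intervalIntegrable_const) fun r ⟨hr0, _⟩ => ?_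
      have := hbound (r * s)
      rw [abs_mul, abs_of_nonneg hr0, Real.mul_rpow hr0 (abs_nonneg s)] at this
      rw [abs_mul]
      nlinarith [abs_nonneg s]
    _ = a * |s| ^ (e + 1) / (e + 1) + b * |s| := by
      rw [intervalIntegral.integral_add (hpow.const_mul _) intervalIntegrable_const,
        intervalIntegral.integral_const_mul, integral_rpow (Or.inl (by linarith)),
        Real.rpow_add_one' (abs_nonneg s) (by linarith)]
      simp [Real.zero_rpow (by linarith : e + 1 ≠ 0)]
      ring

theorem mul_rpow_le_young {p q σ τ : ℝ} (hp : 1 < p) (hσ : 0 ≤ σ) (hτ : 0 ≤ τ) :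
    σ * τ ^ (q * (p - 1) / p) ≤ σ ^ p / p + (p - 1) / p * τ ^ q := by
  have hconj := Real.HolderConjugate.conjExponent hp
  have hpow : (τ ^ (q * (p - 1) / p)) ^ Real.conjExponent p = τ ^ q := by
    rw [← Real.rpow_mul hτ, Real.conjExponent]
    congr 1
    field_simp [show p - 1 ≠ 0 by linarith]
  have := Real.young_inequality_of_nonneg hσ (Real.rpow_nonneg hτ (q * (p - 1) / p)) hconj
  rw [hpow, Real.conjExponent, div_div_eq_mul_div] at this
  exact this.trans_eq (by ring)

theorem abs_le_of_partialDeriv_bounds {F Fs : ℝ → ℝ → ℝ} {Ft : ℝ → ℝ} {p q a b c d : ℝ}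
    (hp : 1 < p) (hq : 1 ≤ q) (ha : 0 ≤ a)
    (hFs : ∀ s t, HasDerivAt (F · t) (Fs s t) s) (hFs_cont : ∀ t, Continuous (Fs · t))
    (hFt : ∀ t, HasDerivAt (F 0) (Ft t) t) (hFt_cont : Continuous Ft) (hF00 : F 0 0 = 0)
    (hFs_le : ∀ s t, |Fs s t| ≤ a * (|s| ^ (p - 1) + |t| ^ (q * (p - 1) / p)) + c)
    (hFt_le : ∀ t, |Ft t| ≤ b * |t| ^ (q - 1) + d) (s t : ℝ) :
    |F s t| ≤ 2 * a / p * |s| ^ p + ((p - 1) * a / p + b / q) * |t| ^ q + c * |s| + d * |t| := by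
  have hs : |F s t - F 0 t| ≤ a * |s| ^ p / p + (a * |t| ^ (q * (p - 1) / p) + c) * |s| := by
    have := abs_sub_le_of_abs_deriv_le_rpow (b := a * |t| ^ (q * (p - 1) / p) + c)
      (sub_nonneg.2 hp.le) (hFs · t) (hFs_cont t)
      (fun z => (hFs_le z t).trans_eq (by ring)) s
    rwa [sub_add_cancel] at this
  have ht : |F 0 t| ≤ b * |t| ^ q / q + d * |t| := by
    have := abs_sub_le_of_abs_deriv_le_rpow (sub_nonneg.2 hq) hFt hFt_cont hFt_le t
    rwa [sub_add_cancel, hF00, sub_zero] at this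
  have hyoung := mul_le_mul_of_nonneg_left (mul_rpow_le_young (q := q) hp (abs_nonneg s)
    (abs_nonneg t)) ha
  calc |F s t| ≤ |F s t - F 0 t| + |F 0 t| := by linarith [abs_sub_abs_le_abs_sub (F s t) (F 0 t)]
    _ ≤ a * |s| ^ p / p + a * (|s| * |t| ^ (q * (p - 1) / p)) + c * |s|
        + (b * |t| ^ q / q + d * |t|) := by linarith
    _ ≤ _ := by linear_combination hyoung

namespace WGraph

variable {V : Type*} (G : WGraph V)

theorem lpNorm_nonneg (r : ℝ) (g : V → ℝ) : 0 ≤ G.lpNorm r g :=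
  Real.rpow_nonneg (tsum_nonneg fun x => mul_nonneg (G.mu_pos x).le (by positivity)) _

section Sobolev

variable {h : V → ℝ} {s h0 : ℝ} {u : V → ℝ}

theorem mul_mul_abs_rpow_le (hh : ∀ x, h0 ≤ h x) (x : V) :
    h0 * (G.μ x * |u x| ^ s) ≤ G.μ x * (G.grad u x ^ s + h x * |u x| ^ s) := by
  have hgrad : 0 ≤ G.grad u x ^ s := Real.rpow_nonneg (Real.sqrt_nonneg _) _
  have hh0u := mul_le_mul_of_nonneg_right (hh x) (Real.rpow_nonneg (abs_nonneg (u x)) s)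
  nlinarith [G.mu_pos x]

theorem memLpV_of_sobSummable (hh0 : 0 < h0) (hh : ∀ x, h0 ≤ h x) (hu : G.SobSummable h s u) :
    G.MemLpV s u :=
  .of_nonneg_of_le (fun x => mul_nonneg (G.mu_pos x).le (by positivity))
    (fun x => (le_div_iff₀' hh0).2 (G.mul_mul_abs_rpow_le hh x)) (hu.div_const h0)

theorem tsum_abs_rpow_le_sobSum (hh0 : 0 < h0) (hh : ∀ x, h0 ≤ h x) (hu : G.SobSummable h s u) :
    ∑' x, G.μ x * |u x| ^ s ≤ G.sobSum h s u / h0 := by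
  rw [le_div_iff₀' hh0, ← tsum_mul_left]
  exact (G.memLpV_of_sobSummable hh0 hh hu).mul_left h0 |>.tsum_le_tsum
    (G.mul_mul_abs_rpow_le hh) hu

theorem lpNorm_le_sobNorm (hs : 0 < s) (hh0 : 0 < h0) (hh : ∀ x, h0 ≤ h x)
    (hu : G.SobSummable h s u) : G.lpNorm s u ≤ h0 ^ (-(1 / s)) * G.sobNorm h s u := by
  have hsob : 0 ≤ G.sobSum h s u :=
    tsum_nonneg fun x => le_trans (mul_nonneg hh0.le (mul_nonneg (G.mu_pos x).le (by positivity)))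
      (G.mul_mul_abs_rpow_le hh x)
  calc G.lpNorm s u ≤ (G.sobSum h s u / h0) ^ (1 / s) :=
        Real.rpow_le_rpow (tsum_nonneg fun x => mul_nonneg (G.mu_pos x).le (by positivity))
          (G.tsum_abs_rpow_le_sobSum hh0 hh hu) (by positivity)
    _ = h0 ^ (-(1 / s)) * G.sobNorm h s u := by
      rw [Real.div_rpow hsob hh0.le, Real.rpow_neg hh0.le, sobNorm, div_eq_inv_mul]

end Sobolev

theorem summable_and_tsum_le_lpNorm_mul_lpNorm {r s : ℝ} (hrs : r.HolderConjugate s)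
    {g w : V → ℝ} (hg : G.MemLpV r g) (hw : G.MemLpV s w) :
    (Summable fun x => G.μ x * (|g x| * |w x|)) ∧
      ∑' x, G.μ x * (|g x| * |w x|) ≤ G.lpNorm r g * G.lpNorm s w := by
  have hμ := G.mu_pos
  have hweight : ∀ {r : ℝ}, r ≠ 0 → ∀ (f : V → ℝ) (x : V),
      (G.μ x ^ (1 / r) * |f x|) ^ r = G.μ x * |f x| ^ r := fun hr f x => by
    rw [Real.mul_rpow (Real.rpow_nonneg (hμ x).le _) (abs_nonneg _), ← Real.rpow_mul (hμ x).le,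
      one_div_mul_cancel hr, Real.rpow_one]
  have hsplit : ∀ x, G.μ x ^ (1 / r) * |g x| * (G.μ x ^ (1 / s) * |w x|)
      = G.μ x * (|g x| * |w x|) := fun x => by
    rw [mul_mul_mul_comm, ← Real.rpow_add (hμ x), one_div, one_div, hrs.inv_add_inv_eq_one,
      Real.rpow_one]
  obtain ⟨hsum, hle⟩ := Real.summable_and_inner_le_Lp_mul_Lq_tsum_of_nonneg hrs
    (f := fun x => G.μ x ^ (1 / r) * |g x|) (g := fun x => G.μ x ^ (1 / s) * |w x|)
    (fun x => mul_nonneg (Real.rpow_nonneg (hμ x).le _) (abs_nonneg _))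
    (fun x => mul_nonneg (Real.rpow_nonneg (hμ x).le _) (abs_nonneg _))
    (hg.congr fun x => (hweight hrs.ne_zero g x).symm)
    (hw.congr fun x => (hweight hrs.symm.ne_zero w x).symm)
  simp only [hsplit, hweight hrs.ne_zero, hweight hrs.symm.ne_zero] at hsum hle
  exact ⟨hsum, hle⟩

theorem summable_and_tsum_le_of_le_growth {p q h0 a b : ℝ} {h1 h2 g1 g2 u v Φ : V → ℝ}
    (hp : 1 < p) (hq : 1 < q) (hh0 : 0 < h0) (hh1 : ∀ x, h0 ≤ h1 x) (hh2 : ∀ x, h0 ≤ h2 x)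
    (ha : 0 ≤ a) (hb : 0 ≤ b) (hg1 : G.MemLpV (p / (p - 1)) g1) (hg2 : G.MemLpV (q / (q - 1)) g2)
    (hu : G.SobSummable h1 p u) (hv : G.SobSummable h2 q v) (hΦ : ∀ x, 0 ≤ Φ x)
    (hΦ_le : ∀ x, Φ x ≤ a * |u x| ^ p + b * |v x| ^ q + |g1 x| * |u x| + |g2 x| * |v x|) :
    (Summable fun x => G.μ x * Φ x) ∧
      ∑' x, G.μ x * Φ x ≤ a / h0 * G.sobSum h1 p u + b / h0 * G.sobSum h2 q v
        + h0 ^ (-(1 / p)) * G.lpNorm (p / (p - 1)) g1 * G.sobNorm h1 p u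
        + h0 ^ (-(1 / q)) * G.lpNorm (q / (q - 1)) g2 * G.sobNorm h2 q v := by
  have hu' := G.memLpV_of_sobSummable hh0 hh1 hu
  have hv' := G.memLpV_of_sobSummable hh0 hh2 hv
  obtain ⟨hgu, hgu_le⟩ := G.summable_and_tsum_le_lpNorm_mul_lpNorm
    (Real.HolderConjugate.conjExponent hp).symm hg1 hu'
  obtain ⟨hgv, hgv_le⟩ := G.summable_and_tsum_le_lpNorm_mul_lpNorm
    (Real.HolderConjugate.conjExponent hq).symm hg2 hv'
  have hmaj := (((hu'.hasSum.mul_left a).add (hv'.hasSum.mul_left b)).add hgu.hasSum).add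
    hgv.hasSum
  have hpt : ∀ x, G.μ x * Φ x ≤ a * (G.μ x * |u x| ^ p) + b * (G.μ x * |v x| ^ q)
      + G.μ x * (|g1 x| * |u x|) + G.μ x * (|g2 x| * |v x|) := fun x =>
    (mul_le_mul_of_nonneg_left (hΦ_le x) (G.mu_pos x).le).trans_eq (by ring)
  have hsum : Summable fun x => G.μ x * Φ x :=
    hmaj.summable.of_nonneg_of_le (fun x => mul_nonneg (G.mu_pos x).le (hΦ x)) hpt
  refine ⟨hsum, (hasSum_le hpt hsum.hasSum hmaj).trans ?_⟩
  calc _ ≤ a * (G.sobSum h1 p u / h0) + b * (G.sobSum h2 q v / h0)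
        + G.lpNorm (p / (p - 1)) g1 * (h0 ^ (-(1 / p)) * G.sobNorm h1 p u)
        + G.lpNorm (q / (q - 1)) g2 * (h0 ^ (-(1 / q)) * G.sobNorm h2 q v) := by
        gcongr
        · exact G.tsum_abs_rpow_le_sobSum hh0 hh1 hu
        · exact G.tsum_abs_rpow_le_sobSum hh0 hh2 hv
        · exact hgu_le.trans (mul_le_mul_of_nonneg_left
            (G.lpNorm_le_sobNorm (by linarith) hh0 hh1 hu) (G.lpNorm_nonneg _ _))
        · exact hgv_le.trans (mul_le_mul_of_nonneg_left
            (G.lpNorm_le_sobNorm (by linarith) hh0 hh2 hv) (G.lpNorm_nonneg _ _))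
    _ = _ := by ring

end WGraph

theorem IsC1Pair.abs_le {V : Type*} {F Fs Ft : V → ℝ → ℝ → ℝ} {p q : ℝ} {f1 f2 g1 g2 : V → ℝ}
    (hC1 : IsC1Pair F Fs Ft) (hp : 1 < p) (hq : 1 ≤ q) (hF00 : ∀ x, F x 0 0 = 0)
    (hf1 : ∀ x, 0 ≤ f1 x)
    (hFs : ∀ x s t, |Fs x s t| ≤ f1 x * (|s| ^ (p - 1) + |t| ^ (q * (p - 1) / p)) + g1 x)
    (hFt : ∀ x s t, |Ft x s t| ≤ f2 x * (|s| ^ p + |t| ^ (q - 1)) + g2 x) (x : V) (s t : ℝ) :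
    |F x s t| ≤ 2 * f1 x / p * |s| ^ p + ((p - 1) * f1 x / p + f2 x / q) * |t| ^ q
      + g1 x * |s| + g2 x * |t| := by
  obtain ⟨hFs_deriv, hFt_deriv, hFs_cont, hFt_cont⟩ := hC1 x
  have hFt0 : ∀ t, |Ft x 0 t| ≤ f2 x * |t| ^ (q - 1) + g2 x := fun t => by
    simpa [Real.zero_rpow (by linarith : p ≠ 0)] using hFt x 0 t
  exact abs_le_of_partialDeriv_bounds hp hq (hf1 x) hFs_deriv
    (fun t => hFs_cont.comp (.prodMk_left t)) (hFt_deriv 0)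
    (hFt_cont.comp (.prodMk_right 0)) (hF00 x) (hFs x) hFt0 s t

theorem primitive_sum_bound_general {V : Type*} (G : WGraph V) (p q : ℝ) (hp : 2 ≤ p) (hq : 2 ≤ q)
    (h0 : ℝ) (hh0 : 0 < h0)
    (h1 h2 : V → ℝ) (hh1 : ∀ x, h0 ≤ h1 x) (hh2 : ∀ x, h0 ≤ h2 x)
    (F Fs Ft : V → ℝ → ℝ → ℝ) (hC1 : IsC1Pair F Fs Ft) (hF00 : ∀ x, F x 0 0 = 0)
    (f1 f2 g1 g2 : V → ℝ)
    (hf1 : ∀ x, 0 ≤ f1 x) (hf2 : ∀ x, 0 ≤ f2 x)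
    (hf1b : BddAbove (Set.range f1)) (hf2b : BddAbove (Set.range f2))
    (hg1L : G.MemLpV (p / (p - 1)) g1) (hg2L : G.MemLpV (q / (q - 1)) g2)
    (hFs : ∀ x s t, |Fs x s t| ≤ f1 x * (|s| ^ (p - 1) + |t| ^ (q * (p - 1) / p)) + g1 x)
    (hFt : ∀ x s t, |Ft x s t| ≤ f2 x * (|s| ^ p + |t| ^ (q - 1)) + g2 x)
    (u v : V → ℝ) (hu : G.SobSummable h1 p u) (hv : G.SobSummable h2 q v) :
    (Summable fun x => G.μ x * |F x (u x) (v x)|) ∧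
    ∑' x, G.μ x * |F x (u x) (v x)| ≤
      (2 * (⨆ x, f1 x) / (p * h0)) * G.sobSum h1 p u
        + ((p - 1) * (⨆ x, f1 x) / (p * h0) + (⨆ x, f2 x) / (q * h0)) * G.sobSum h2 q v
        + h0 ^ (-(1 / p)) * G.lpNorm (p / (p - 1)) g1 * G.sobNorm h1 p u
        + h0 ^ (-(1 / q)) * G.lpNorm (q / (q - 1)) g2 * G.sobNorm h2 q v := by
  set C1 := ⨆ x, f1 x
  set C2 := ⨆ x, f2 x
  have hp1 : 1 < p := by linarith
  have hq1 : 1 < q := by linarith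
  have hC1_nonneg : 0 ≤ C1 := Real.iSup_nonneg hf1
  have hC2_nonneg : 0 ≤ C2 := Real.iSup_nonneg hf2
  have hpt : ∀ x, |F x (u x) (v x)| ≤ 2 * C1 / p * |u x| ^ p
      + ((p - 1) * C1 / p + C2 / q) * |v x| ^ q + |g1 x| * |u x| + |g2 x| * |v x| := fun x => by
    have hf1C : f1 x ≤ C1 := le_ciSup hf1b x
    have hf2C : f2 x ≤ C2 := le_ciSup hf2b x
    refine (hC1.abs_le hp1 hq1.le hF00 hf1 hFs hFt x (u x) (v x)).trans ?_
    gcongr <;> exact le_abs_self _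
  obtain ⟨hsum, hle⟩ := G.summable_and_tsum_le_of_le_growth hp1 hq1 hh0 hh1 hh2
    (by positivity) (by positivity) hg1L hg2L hu hv (fun x => abs_nonneg _) hpt
  exact ⟨hsum, hle.trans_eq (by ring)⟩

/-- key estimate of Lemma 3.1: under (H1) and (F1) the sum
`∑_{x∈V} μ(x)|F(x,u(x),v(x))|` converges for `u ∈ W_{h1}^{1,p}`, `v ∈ W_{h2}^{1,q}`, and is
bounded by
`(2‖f1‖_∞/(p h0))‖u‖^p + ((p−1)‖f1‖_∞/(p h0) + ‖f2‖_∞/(q h0))‖v‖^q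
  + h0^{−1/p}‖g1‖_{L^{p/(p−1)}}‖u‖ + h0^{−1/q}‖g2‖_{L^{q/(q−1)}}‖v‖`. -/
theorem primitive_sum_bound {V : Type*} (G : WGraph V) (p q : ℝ) (hp : 2 ≤ p) (hq : 2 ≤ q)
    (μ0 h0 : ℝ) (hμ0 : 0 < μ0) (hh0 : 0 < h0) (hμ : ∀ x, μ0 ≤ G.μ x)
    (h1 h2 : V → ℝ) (hh1 : ∀ x, h0 ≤ h1 x) (hh2 : ∀ x, h0 ≤ h2 x)
    (F Fs Ft : V → ℝ → ℝ → ℝ) (hC1 : IsC1Pair F Fs Ft) (hF00 : ∀ x, F x 0 0 = 0)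
    (f1 f2 g1 g2 : V → ℝ)
    (hf1 : ∀ x, 0 ≤ f1 x) (hf2 : ∀ x, 0 ≤ f2 x)
    (hf1b : BddAbove (Set.range f1)) (hf2b : BddAbove (Set.range f2))
    (hg1 : ∀ x, 0 ≤ g1 x) (hg2 : ∀ x, 0 ≤ g2 x)
    (hg1L : G.MemLpV (p / (p - 1)) g1) (hg2L : G.MemLpV (q / (q - 1)) g2)
    (hFs : ∀ x s t, |Fs x s t| ≤ f1 x * (|s| ^ (p - 1) + |t| ^ (q * (p - 1) / p)) + g1 x)
    (hFt : ∀ x s t, |Ft x s t| ≤ f2 x * (|s| ^ p + |t| ^ (q - 1)) + g2 x)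
    (u v : V → ℝ) (hu : G.SobSummable h1 p u) (hv : G.SobSummable h2 q v) :
    (Summable fun x => G.μ x * |F x (u x) (v x)|) ∧
    ∑' x, G.μ x * |F x (u x) (v x)| ≤
      (2 * (⨆ x, f1 x) / (p * h0)) * G.sobSum h1 p u
        + ((p - 1) * (⨆ x, f1 x) / (p * h0) + (⨆ x, f2 x) / (q * h0)) * G.sobSum h2 q v
        + h0 ^ (-(1 / p)) * G.lpNorm (p / (p - 1)) g1 * G.sobNorm h1 p u
        + h0 ^ (-(1 / q)) * G.lpNorm (q / (q - 1)) g2 * G.sobNorm h2 q v :=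
  primitive_sum_bound_general G p q hp hq h0 hh0 h1 h2 hh1 hh2 F Fs Ft hC1 hF00 f1 f2 g1 g2 hf1 hf2
    hf1b hf2b hg1L hg2L hFs hFt u v hu hv
end
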